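/- arXiv:1409.6002 — 2 statements merged into one kernel-verified Lean document; each statement's English description precedes it below -/
import Mathlib

section
/- Let r ≥ 3 and let G be a 2r-regular graph of order n with n ≡ 0 (mod r), in which there exist r completely independent spanning trees T_1, …, T_r. Then for every integer i with 1 ≤ i ≤ r one has |inn(T_i)| = n/r and ped(T_i) = 2. -/
open SimpleGraph

/-- The degree of the vertex `v` in the graph `T`, as the cardinality of its
neighbor set. -/
noncomputable def degN {V : Type*} (T : SimpleGraph V) (v : V) : ℕ :=
  (T.neighborSet v).ncard

/-- `T` is a spanning tree of `G`: a subgraph of `G` (on the same vertex set)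
which is a tree. -/
def IsSpanningTreeOf {V : Type*} (G T : SimpleGraph V) : Prop :=
  T ≤ G ∧ T.IsTree

/-- The set of inner (non-leaf) vertices of `T`. -/
def inn {V : Type*} (T : SimpleGraph V) : Set V :=
  {v | 2 ≤ degN T v}

/-- `T 0, …, T (r-1)` are completely independent spanning trees of `G`:
pairwise edge-disjoint spanning trees of `G` such that every vertex has degree
greater than `1` in at most one of them. -/
def AreCISTs {V : Type*} {r : ℕ} (G : SimpleGraph V) (T : Fin r → SimpleGraph V) : Prop :=
  (∀ i, IsSpanningTreeOf G (T i)) ∧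
  (∀ i j, i ≠ j → Disjoint ((T i).edgeSet) ((T j).edgeSet)) ∧
  (∀ v : V, ∀ i j, 1 < degN (T i) v → 1 < degN (T j) v → i = j)

/-- `G` is `d`-regular: every vertex has degree `d`. -/
def IsRegularDeg {V : Type*} (G : SimpleGraph V) (d : ℕ) : Prop :=
  ∀ v, degN G v = d

/-- The set of lost edges: edges of `G` belonging to none of the trees `T i`. -/
def lostEdges {V : Type*} {r : ℕ} (G : SimpleGraph V) (T : Fin r → SimpleGraph V) :
    Set (Sym2 V) :=
  G.edgeSet \ ⋃ i, (T i).edgeSet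

/-- `E^l_T`: the set of edges of `G` having both endpoints inner vertices of `T`
and which are not edges of `T`. -/
def lostAt {V : Type*} (G T : SimpleGraph V) : Set (Sym2 V) :=
  {e | e ∈ G.edgeSet ∧ (∀ v ∈ e, v ∈ inn T) ∧ e ∉ T.edgeSet}

/-- The potential extra degree of a spanning tree `T` of a `2r`-regular graph of
order `n`: `ped(T) = |inn(T)|·r − n + 2` (as an integer). -/
noncomputable def ped {V : Type*} (n r : ℕ) (T : SimpleGraph V) : ℤ :=
  ((inn T).ncard : ℤ) * r - n + 2

/-!
Every vertex has degree at least one in each of the `r` edge-disjoint trees, whose degrees at a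
vertex add up to at most `2r`; so each tree has maximum degree at most `r + 1`. Summing degrees in
`T_i` with `k = |inn(T_i)|` gives `2(n - 1) ≤ (n - k) + (r + 1)k`, i.e. `n ≤ rk + 2`, and as
`r ≥ 3` this forces `k ≥ n/r`. The inner vertex sets of CISTs are pairwise disjoint, so these `r`
numbers add up to at most `n = r · (n/r)`, and all of them equal `n/r`.
-/

open Finset

namespace SimpleGraph

variable {V : Type*}

lemma degN_eq_degree (G : SimpleGraph V) (v : V) [Fintype (G.neighborSet v)] :
    degN G v = G.degree v :=
  Set.ncard_eq_toFinset_card' _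

variable [Fintype V]

lemma ncard_inn_eq_card_filter (G : SimpleGraph V) [DecidableRel G.Adj] :
    (inn G).ncard = #{v | 2 ≤ G.degree v} := by
  rw [← Set.ncard_coe_finset]
  congr 1
  ext v
  simp [inn, degN_eq_degree]

lemma sum_degree_le_of_pairwise_disjoint {ι : Type*} [Fintype ι] {G : SimpleGraph V}
    {H : ι → SimpleGraph V} [DecidableRel G.Adj] [∀ i, DecidableRel (H i).Adj]
    (hle : ∀ i, H i ≤ G) (hdisj : Pairwise fun i j ↦ Disjoint (H i).edgeSet (H j).edgeSet)
    (v : V) : ∑ i, (H i).degree v ≤ G.degree v := by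
  classical
  have hnbr : Pairwise fun i j ↦ Disjoint ((H i).neighborFinset v) ((H j).neighborFinset v) :=
    fun i j hij ↦ Finset.disjoint_left.2 fun _ hui huj ↦ Set.disjoint_left.1 (hdisj hij)
      ((H i).mem_edgeSet.2 ((H i).mem_neighborFinset v _ |>.1 hui))
      ((H j).mem_edgeSet.2 ((H j).mem_neighborFinset v _ |>.1 huj))
  calc ∑ i, (H i).degree v = #(univ.biUnion fun i ↦ (H i).neighborFinset v) :=
        (card_biUnion fun i _ j _ hij ↦ hnbr hij).symm
    _ ≤ #(G.neighborFinset v) := card_le_card <| biUnion_subset.2 fun i _ u hu ↦ by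
        simpa using hle i (by simpa using hu)
    _ = G.degree v := rfl

lemma degree_add_card_sub_one_le_of_pairwise_disjoint {ι : Type*} [Fintype ι]
    {G : SimpleGraph V} {H : ι → SimpleGraph V} [DecidableRel G.Adj]
    [∀ i, DecidableRel (H i).Adj] (hle : ∀ i, H i ≤ G)
    (hdisj : Pairwise fun i j ↦ Disjoint (H i).edgeSet (H j).edgeSet) {v : V}
    (hpos : ∀ j, 0 < (H j).degree v) (i : ι) :
    (H i).degree v + (Fintype.card ι - 1) ≤ G.degree v := by
  classical
  calc (H i).degree v + (Fintype.card ι - 1)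
      = (H i).degree v + #(univ.erase i) • 1 := by simp [card_erase_of_mem]
    _ ≤ (H i).degree v + ∑ j ∈ univ.erase i, (H j).degree v := by
        gcongr; exact card_nsmul_le_sum _ _ 1 fun j _ ↦ hpos j
    _ = ∑ j, (H j).degree v := add_sum_erase _ (fun j ↦ (H j).degree v) (mem_univ i)
    _ ≤ G.degree v := sum_degree_le_of_pairwise_disjoint hle hdisj v

lemma sum_degree_le_card_add_mul_card_filter (G : SimpleGraph V) [DecidableRel G.Adj] {D : ℕ}
    (hD : ∀ v, G.degree v ≤ D + 1) :
    ∑ v, G.degree v ≤ Fintype.card V + D * #{v | 2 ≤ G.degree v} := by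
  calc ∑ v, G.degree v ≤ ∑ v, (1 + if 2 ≤ G.degree v then D else 0) :=
        sum_le_sum fun v _ ↦ by have := hD v; split_ifs <;> omega
    _ = Fintype.card V + D * #{v | 2 ≤ G.degree v} := by
        simp [sum_add_distrib, sum_ite, mul_comm]

lemma IsTree.card_le_mul_card_filter_add_two {T : SimpleGraph V} [DecidableRel T.Adj]
    (hT : T.IsTree) {D : ℕ} (hD : ∀ v, T.degree v ≤ D + 1) :
    Fintype.card V ≤ D * #{v | 2 ≤ T.degree v} + 2 := by
  have hsum := T.sum_degree_le_card_add_mul_card_filter hD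
  rw [sum_degrees_eq_twice_card_edges] at hsum
  have := hT.card_edgeFinset
  omega

end SimpleGraph

namespace AreCISTs

variable {V : Type*} {r : ℕ} {G : SimpleGraph V} {T : Fin r → SimpleGraph V}

lemma pairwise_disjoint_inn (hT : AreCISTs G T) :
    Pairwise fun i j ↦ Disjoint (inn (T i)) (inn (T j)) :=
  fun i j hij ↦ Set.disjoint_left.2 fun v hvi hvj ↦ hij (hT.2.2 v i j hvi hvj)

lemma sum_ncard_inn_le [Finite V] (hT : AreCISTs G T) :
    ∑ i, (inn (T i)).ncard ≤ Nat.card V := by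
  rw [← finsum_eq_sum_of_fintype,
    ← Set.ncard_iUnion_of_finite (fun _ ↦ Set.toFinite _) hT.pairwise_disjoint_inn]
  exact Set.ncard_le_card _

lemma card_le_mul_ncard_inn_add_two [Fintype V] (hT : AreCISTs G T)
    (hdeg : ∀ v, degN G v ≤ 2 * r) (i : Fin r) :
    Fintype.card V ≤ r * (inn (T i)).ncard + 2 := by
  classical
  obtain hV | hV := subsingleton_or_nontrivial V
  · have := Fintype.card_le_one_iff_subsingleton.2 hV
    omega
  have hmax : ∀ v, (T i).degree v ≤ r + 1 := fun v ↦ by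
    have := degree_add_card_sub_one_le_of_pairwise_disjoint (fun j ↦ (hT.1 j).1)
      (fun _ _ ↦ hT.2.1 _ _)
      (fun j ↦ (hT.1 j).2.connected.preconnected.degree_pos_of_nontrivial v) i
    rw [Fintype.card_fin, ← degN_eq_degree G] at this
    have := hdeg v
    omega
  rw [ncard_inn_eq_card_filter]
  exact (hT.1 i).2.card_le_mul_card_filter_add_two hmax

end AreCISTs

/-- If `G` is a `2r`-regular graph of order `n` with `r ≥ 3` and `n ≡ 0 (mod r)`,
admitting `r` completely independent spanning trees `T_1, …, T_r`, then for every
`i`, `|inn(T_i)| = n/r` and `ped(T_i) = 2`. -/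
theorem stmt_6 {V : Type*} [Fintype V] (r : ℕ) (hr : 3 ≤ r)
    (G : SimpleGraph V) (hreg : IsRegularDeg G (2 * r))
    (hdvd : r ∣ Fintype.card V)
    (T : Fin r → SimpleGraph V) (hT : AreCISTs G T) :
    ∀ i : Fin r,
      (inn (T i)).ncard = Fintype.card V / r ∧
      ped (Fintype.card V) r (T i) = 2 := by
  have hlow : ∀ i, Fintype.card V / r ≤ (inn (T i)).ncard := fun i ↦ by
    have := hT.card_le_mul_ncard_inn_add_two (fun v ↦ (hreg v).le) i
    exact Nat.lt_succ_iff.1 <| (Nat.div_lt_iff_lt_mul (by omega)).2 (by nlinarith)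
  have hsum : ∑ i, (inn (T i)).ncard ≤ ∑ _ : Fin r, Fintype.card V / r := by
    simpa [Nat.mul_div_cancel' hdvd, Nat.card_eq_fintype_card] using hT.sum_ncard_inn_le
  have hk : ∀ i, (inn (T i)).ncard = Fintype.card V / r := fun i ↦
    ((sum_eq_sum_iff_of_le fun i _ ↦ hlow i).1 (le_antisymm (sum_le_sum fun i _ ↦ hlow i) hsum)
      i (mem_univ i)).symm
  intro i
  refine ⟨hk i, ?_⟩
  rw [ped, hk i, ← Nat.cast_mul, Nat.div_mul_cancel hdvd, sub_self, zero_add]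
end

section
/- For all integers n ≥ 3 and r ≥ 2, there exist r completely independent spanning trees in the Cartesian product K_{2r} □ C_n of the complete graph on 2r vertices and the cycle on n vertices. -/
open SimpleGraph

/-!
Split the vertices of `K_{2r}` into the pairs `{2k, 2k+1}`. The `k`-th tree is a path along
the cycle in row `2k` (omitting one cycle edge), each vertex of row `2k+1` hanging below its
neighbour in row `2k`, and every other vertex `(a, c)` hanging below `(2k, c)` or `(2k+1, c)`.
Its inner vertices therefore lie in rows `2k` and `2k+1`. The choice between `2k` and `2k+1`
is made so that a `K_{2r}`-edge `{a, b}` between pairs `i < j` lies in tree `i` exactly when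
`a` and `b` have the same parity, and in tree `j` exactly when they do not; this makes the trees
edge-disjoint.
-/

namespace SimpleGraph

variable {V : Type*}

def parentGraph (root : V) (p : V → V) : SimpleGraph V :=
  fromRel fun a b => a ≠ root ∧ p a = b

variable {root : V} {p : V → V}

lemma parentGraph_adj {a b : V} :
    (parentGraph root p).Adj a b ↔ a ≠ b ∧ ((a ≠ root ∧ p a = b) ∨ (b ≠ root ∧ p b = a)) :=
  fromRel_adj _ a b

lemma parentGraph_le {G : SimpleGraph V} (hG : ∀ v, v ≠ root → G.Adj v (p v)) :
    parentGraph root p ≤ G := by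
  intro a b hab
  rcases (parentGraph_adj.mp hab).2 with ⟨ha, rfl⟩ | ⟨hb, rfl⟩
  · exact hG a ha
  · exact (hG b hb).symm

lemma degN_parentGraph_le_one {v : V} (hv : ∀ u, u ≠ root → p u ≠ v) :
    degN (parentGraph root p) v ≤ 1 := by
  have hsub : (parentGraph root p).neighborSet v ⊆ {p v} := by
    intro u hu
    rcases (parentGraph_adj.mp hu).2 with ⟨_, rfl⟩ | ⟨hu, hpu⟩
    · rfl
    · exact absurd hpu (hv u hu)
  exact (Set.ncard_le_ncard hsub).trans (Set.ncard_singleton _).le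

variable {m : V → ℕ}

lemma ne_parent (hm : ∀ v, v ≠ root → m (p v) < m v) {v : V} (hv : v ≠ root) : v ≠ p v :=
  fun h => (hm v hv).ne (congrArg m h).symm

lemma parentGraph_reachable_root (hm : ∀ v, v ≠ root → m (p v) < m v) (v : V) :
    (parentGraph root p).Reachable v root := by
  by_cases hv : v = root
  · exact hv ▸ Reachable.refl _
  · have hadj : (parentGraph root p).Adj v (p v) :=
      parentGraph_adj.mpr ⟨ne_parent hm hv, Or.inl ⟨hv, rfl⟩⟩
    exact hadj.reachable.trans (parentGraph_reachable_root hm (p v))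
termination_by m v
decreasing_by exact hm v hv

lemma parentGraph_connected (hm : ∀ v, v ≠ root → m (p v) < m v) :
    (parentGraph root p).Connected :=
  (connected_iff _).mpr ⟨fun u v => (parentGraph_reachable_root hm u).trans
    (parentGraph_reachable_root hm v).symm, ⟨root⟩⟩

lemma parentGraph_edgeSet (hm : ∀ v, v ≠ root → m (p v) < m v) :
    (parentGraph root p).edgeSet = (fun v => s(v, p v)) '' {root}ᶜ := by
  ext e
  induction e using Sym2.ind with | h a b => ?_
  rw [mem_edgeSet, parentGraph_adj]
  constructor
  · rintro ⟨-, ⟨ha, rfl⟩ | ⟨hb, rfl⟩⟩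
    · exact ⟨a, ha, rfl⟩
    · exact ⟨b, hb, Sym2.eq_swap⟩
  · rintro ⟨x, hx, hex⟩
    have hxp := ne_parent hm hx
    rcases Sym2.eq_iff.mp hex with ⟨rfl, rfl⟩ | ⟨rfl, rfl⟩
    · exact ⟨hxp, Or.inl ⟨hx, rfl⟩⟩
    · exact ⟨hxp.symm, Or.inr ⟨hx, rfl⟩⟩

/-- Two non-root vertices with the same parent edge would be each other's parent, which the
strictly decreasing rank forbids. -/
lemma injOn_parentEdge (hm : ∀ v, v ≠ root → m (p v) < m v) :
    Set.InjOn (fun v => s(v, p v)) {root}ᶜ := by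
  intro u hu v hv huv
  rcases Sym2.eq_iff.mp huv with ⟨h, -⟩ | ⟨h₁, h₂⟩
  · exact h
  · have hu' := hm u hu
    have hv' := hm v hv
    rw [h₂] at hu'
    rw [← h₁] at hv'
    omega

lemma parentGraph_isTree [Finite V] (hm : ∀ v, v ≠ root → m (p v) < m v) :
    (parentGraph root p).IsTree := by
  refine isTree_iff_connected_and_card.mpr ⟨parentGraph_connected hm, ?_⟩
  rw [Nat.card_coe_set_eq, parentGraph_edgeSet hm, (injOn_parentEdge hm).ncard_image,
    Set.ncard_compl, Set.ncard_singleton]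
  have : 0 < Nat.card V := Nat.card_pos_iff.mpr ⟨⟨root⟩, inferInstance⟩
  omega

lemma cycleGraph_adj_pred {n : ℕ} {c : Fin n} (hc : c.val ≠ 0) :
    (cycleGraph n).Adj c ⟨c.val - 1, by omega⟩ := by
  rw [cycleGraph_adj', Fin.sub_val_of_le (Fin.mk_le_of_le_val (by omega))]
  exact Or.inl (by simp only; omega)

end SimpleGraph

namespace CompleteBoxCycle

variable {r n : ℕ}

/-- The vertex of the pair `{2k, 2k+1}` below which a vertex `a ≠ 2k` of `K_{2r}` hangs in the
`k`-th tree. -/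
def hub (k : Fin r) (a : Fin (2 * r)) : Fin (2 * r) :=
  ⟨2 * (k : ℕ) + if (k : ℕ) < (a : ℕ) / 2 then (a : ℕ) % 2 else 1 - (a : ℕ) % 2,
    by split <;> omega⟩

lemma val_hub (k : Fin r) (a : Fin (2 * r)) :
    (hub k a : ℕ) = 2 * (k : ℕ) + if (k : ℕ) < (a : ℕ) / 2 then (a : ℕ) % 2 else 1 - (a : ℕ) % 2 :=
  rfl

lemma hub_div_two (k : Fin r) (a : Fin (2 * r)) : (hub k a : ℕ) / 2 = k := by
  rw [val_hub]; split <;> omega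

lemma hub_ne (k : Fin r) (a : Fin (2 * r)) : hub k a ≠ a := by
  rw [ne_eq, Fin.ext_iff, val_hub]; split <;> omega

/-- The parity rule of `hub`: a `K_{2r}`-edge between two pairs is claimed by at most one of
the two corresponding trees. -/
lemma hub_hub_ne {k l : Fin r} (hkl : k ≠ l) (a : Fin (2 * r)) : hub l (hub k a) ≠ a := by
  rw [ne_eq, Fin.ext_iff, val_hub, val_hub]
  have : (k : ℕ) ≠ l := Fin.val_ne_of_ne hkl
  split_ifs <;> omega

def parent (k : Fin r) (v : Fin (2 * r) × Fin n) : Fin (2 * r) × Fin n :=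
  if (v.1 : ℕ) = 2 * k then (v.1, ⟨v.2 - 1, by omega⟩) else (hub k v.1, v.2)

def root (hn : 0 < n) (k : Fin r) : Fin (2 * r) × Fin n :=
  (⟨2 * k, by omega⟩, ⟨0, hn⟩)

def rank (k : Fin r) (v : Fin (2 * r) × Fin n) : ℕ :=
  2 * v.2 + if (v.1 : ℕ) = 2 * k then 0 else if (v.1 : ℕ) = 2 * k + 1 then 1 else 2

def tree (hn : 0 < n) (k : Fin r) : SimpleGraph (Fin (2 * r) × Fin n) :=
  parentGraph (root hn k) (parent k)

lemma parent_fst_div_two (k : Fin r) (v : Fin (2 * r) × Fin n) :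
    ((parent k v).1 : ℕ) / 2 = k := by
  unfold parent
  split
  · simp only; omega
  · exact hub_div_two k v.1

lemma parent_of_ne {k : Fin r} {v : Fin (2 * r) × Fin n} (hv : (v.1 : ℕ) ≠ 2 * k) :
    parent k v = (hub k v.1, v.2) :=
  if_neg hv

lemma rank_parent_lt (hn : 0 < n) (k : Fin r) {v : Fin (2 * r) × Fin n} (hv : v ≠ root hn k) :
    rank k (parent k v) < rank k v := by
  by_cases h : (v.1 : ℕ) = 2 * k
  · have hc : (v.2 : ℕ) ≠ 0 := fun hc => hv (Prod.ext (Fin.ext h) (Fin.ext hc))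
    simp only [rank, parent, if_pos h]
    omega
  · have hdiv := hub_div_two k v.1
    have hne := Fin.val_ne_of_ne (hub_ne k v.1)
    simp only [rank, parent_of_ne h, if_neg h]
    split_ifs <;> omega

lemma adj_parent (hn : 0 < n) (k : Fin r) {v : Fin (2 * r) × Fin n} (hv : v ≠ root hn k) :
    ((⊤ : SimpleGraph (Fin (2 * r))) □ cycleGraph n).Adj v (parent k v) := by
  rw [boxProd_adj]
  by_cases h : (v.1 : ℕ) = 2 * k
  · have hc : (v.2 : ℕ) ≠ 0 := fun hc => hv (Prod.ext (Fin.ext h) (Fin.ext hc))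
    rw [parent, if_pos h]
    exact Or.inr ⟨cycleGraph_adj_pred hc, rfl⟩
  · rw [parent_of_ne h]
    exact Or.inl ⟨(hub_ne k v.1).symm, rfl⟩

lemma isSpanningTreeOf_tree (hn : 0 < n) (k : Fin r) :
    IsSpanningTreeOf ((⊤ : SimpleGraph (Fin (2 * r))) □ cycleGraph n) (tree hn k) :=
  ⟨parentGraph_le fun _ => adj_parent hn k, parentGraph_isTree fun _ => rank_parent_lt hn k⟩

lemma fst_div_two_eq_of_one_lt_degN (hn : 0 < n) {k : Fin r} {v : Fin (2 * r) × Fin n}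
    (hv : 1 < degN (tree hn k) v) : (v.1 : ℕ) / 2 = k := by
  by_contra h
  refine (degN_parentGraph_le_one fun u _ hu => h ?_).not_gt hv
  rw [← hu, parent_fst_div_two]

lemma disjoint_edgeSet_tree (hn : 0 < n) {k l : Fin r} (hkl : k ≠ l) :
    Disjoint (tree hn k).edgeSet (tree hn l).edgeSet := by
  rw [tree, tree, parentGraph_edgeSet fun _ => rank_parent_lt hn k,
    parentGraph_edgeSet fun _ => rank_parent_lt hn l, Set.disjoint_left]
  rintro _ ⟨v, -, rfl⟩ ⟨u, -, huv⟩
  have hkl' : (k : ℕ) ≠ l := Fin.val_ne_of_ne hkl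
  rcases Sym2.eq_iff.mp huv with ⟨-, h⟩ | ⟨h₁, h₂⟩
  · have := congrArg (fun w => (w.1 : ℕ) / 2) h
    simp only [parent_fst_div_two] at this
    exact hkl' this.symm
  · have hu : (u.1 : ℕ) / 2 = k := h₁ ▸ parent_fst_div_two k v
    have hv : (v.1 : ℕ) / 2 = l := h₂ ▸ parent_fst_div_two l u
    rw [parent_of_ne (by omega)] at h₁ h₂
    subst h₁
    exact hub_hub_ne hkl v.1 (congrArg Prod.fst h₂)

end CompleteBoxCycle

theorem stmt_9_general (n r : ℕ) (hn : 3 ≤ n) :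
    ∃ T : Fin r → SimpleGraph (Fin (2 * r) × Fin n),
      AreCISTs ((⊤ : SimpleGraph (Fin (2 * r))) □ cycleGraph n) T := by
  have hn0 : 0 < n := by omega
  open CompleteBoxCycle in
  exact ⟨tree hn0, isSpanningTreeOf_tree hn0, fun k l => disjoint_edgeSet_tree hn0,
    fun v k l hk hl => Fin.ext <|
      (fst_div_two_eq_of_one_lt_degN hn0 hk).symm.trans (fst_div_two_eq_of_one_lt_degN hn0 hl)⟩

/-- For all `n ≥ 3` and `r ≥ 2`, there exist `r` completely independent spanning
trees in `K_{2r} □ C_n`. -/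
theorem stmt_9 (n r : ℕ) (hn : 3 ≤ n) (hr : 2 ≤ r) :
    ∃ T : Fin r → SimpleGraph (Fin (2 * r) × Fin n),
      AreCISTs ((⊤ : SimpleGraph (Fin (2 * r))) □ cycleGraph n) T :=
  stmt_9_general n r hn
end
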